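/- arXiv:1311.5105 — 2 statements merged into one kernel-verified Lean document; each statement's English description precedes it below -/
import Mathlib

section
/- Let r be an odd prime, a, b integers with r ∤ b·(a²−4b), and s an integer with s² ≡ b (mod r). Suppose that neither a + 2s nor a − 2s is a nonzero quadratic residue modulo r (i.e., for each sign ε, the Legendre symbol ((a+2εs)/r) ≠ 1). Then the congruence t⁴ − 2a·t²·z² + (a²−4b)·z⁴ ≡ 0 (mod r) has no solution with r ∤ t and r ∤ z. -/
/-! Over `ZMod r`, with `s² = b` the quartic form factors as
`(t² - (a + 2s) z²) (t² - (a - 2s) z²)`. A zero with `z ≠ 0` therefore makes `a + 2s` or `a - 2s`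
a square, and both are nonzero because their product is the discriminant `a² - 4b`. -/

section CommRing

variable {R : Type*} [CommRing R] {a b s : R}

theorem quartic_eq_mul_of_sq_eq (hs : s ^ 2 = b) (t z : R) :
    t ^ 4 - 2 * a * t ^ 2 * z ^ 2 + (a ^ 2 - 4 * b) * z ^ 4 =
      (t ^ 2 - (a + 2 * s) * z ^ 2) * (t ^ 2 - (a - 2 * s) * z ^ 2) := by
  rw [← hs]; ring

theorem add_two_mul_ne_zero_of_sq_eq (hs : s ^ 2 = b) (hdisc : a ^ 2 - 4 * b ≠ 0) :
    a + 2 * s ≠ 0 := by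
  intro h
  apply hdisc
  rw [← hs, show a ^ 2 - 4 * s ^ 2 = (a + 2 * s) * (a - 2 * s) by ring, h, zero_mul]

end CommRing

section Field

variable {F : Type*} [Field F]

theorem isSquare_of_sq_eq_mul_sq {c t z : F} (hz : z ≠ 0) (h : t ^ 2 = c * z ^ 2) :
    IsSquare c :=
  ⟨t / z, by field_simp; rw [h]⟩

theorem isSquare_add_or_sub_of_quartic_eq_zero {a b s t z : F} (hs : s ^ 2 = b) (hz : z ≠ 0)
    (h : t ^ 4 - 2 * a * t ^ 2 * z ^ 2 + (a ^ 2 - 4 * b) * z ^ 4 = 0) :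
    IsSquare (a + 2 * s) ∨ IsSquare (a - 2 * s) := by
  rw [quartic_eq_mul_of_sq_eq hs, mul_eq_zero, sub_eq_zero, sub_eq_zero] at h
  exact h.imp (isSquare_of_sq_eq_mul_sq hz) (isSquare_of_sq_eq_mul_sq hz)

end Field

theorem no_unit_sol_quartic_general (r : ℕ) [Fact (Nat.Prime r)]
    (a b : ℤ) (hdvd : ¬ (r : ℤ) ∣ b * (a^2 - 4 * b))
    (s : ℤ) (hs : s^2 ≡ b [ZMOD (r : ℤ)])
    (hnr : ∀ ε : ℤ, ε = 1 ∨ ε = -1 → legendreSym r (a + 2 * ε * s) ≠ 1) :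
    ¬ ∃ t z : ℤ, ¬ (r : ℤ) ∣ t ∧ ¬ (r : ℤ) ∣ z ∧
      t^4 - 2 * a * t^2 * z^2 + (a^2 - 4 * b) * z^4 ≡ 0 [ZMOD (r : ℤ)] := by
  rintro ⟨t, z, -, hz, h⟩
  have hb : (s : ZMod r) ^ 2 = b := by exact_mod_cast (ZMod.intCast_eq_intCast_iff _ _ _).mpr hs
  have hdisc : (a : ZMod r) ^ 2 - 4 * b ≠ 0 := by
    have hd : ¬ (r : ℤ) ∣ a ^ 2 - 4 * b := fun h' => hdvd (h'.mul_left b)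
    rw [← ZMod.intCast_zmod_eq_zero_iff_dvd] at hd
    exact_mod_cast hd
  have hz : (z : ZMod r) ≠ 0 := by rwa [Ne, ZMod.intCast_zmod_eq_zero_iff_dvd]
  have hq : (t : ZMod r) ^ 4 - 2 * a * (t : ZMod r) ^ 2 * (z : ZMod r) ^ 2
      + ((a : ZMod r) ^ 2 - 4 * b) * (z : ZMod r) ^ 4 = 0 := by
    exact_mod_cast (ZMod.intCast_eq_intCast_iff _ _ _).mpr h
  have not_square : ∀ ε : ℤ, ε = 1 ∨ ε = -1 → ¬ IsSquare ((a : ZMod r) + 2 * (ε * s)) := by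
    intro ε hε hsq
    have hεs : ((ε * s : ℤ) : ZMod r) ^ 2 = b := by
      rcases hε with rfl | rfl <;> simpa using hb
    refine hnr ε hε ((legendreSym.eq_one_iff r ?_).mpr ?_)
    · simpa [mul_assoc] using add_two_mul_ne_zero_of_sq_eq hεs hdisc
    · simpa [mul_assoc] using hsq
  rcases isSquare_add_or_sub_of_quartic_eq_zero hb hz hq with hsq | hsq
  · exact not_square 1 (Or.inl rfl) (by simpa using hsq)
  · exact not_square (-1) (Or.inr rfl) (by simpa [← sub_eq_add_neg] using hsq)

theorem no_unit_sol_quartic (r : ℕ) [Fact (Nat.Prime r)] (hodd : Odd r)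
    (a b : ℤ) (hdvd : ¬ (r : ℤ) ∣ b * (a^2 - 4 * b))
    (s : ℤ) (hs : s^2 ≡ b [ZMOD (r : ℤ)])
    (hnr : ∀ ε : ℤ, ε = 1 ∨ ε = -1 → legendreSym r (a + 2 * ε * s) ≠ 1) :
    ¬ ∃ t z : ℤ, ¬ (r : ℤ) ∣ t ∧ ¬ (r : ℤ) ∣ z ∧
      t^4 - 2 * a * t^2 * z^2 + (a^2 - 4 * b) * z^4 ≡ 0 [ZMOD (r : ℤ)] :=
  no_unit_sol_quartic_general r a b hdvd s hs hnr
end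

section
/- Let A ≡ 1 (mod 8) and B ≡ 5 (mod 8) be integers, and let d be an even integer and r an odd integer with v₂(d) = 1 and v₂(r) = 0, so that v₂(A) = v₂(B) = 0, v₂(A+B) = 1 and v₂((A−B)²) = 4. Then there are no integers w, t, z, not all zero, and no 2-adic numbers w, t, z, not all zero, such that in ℚ₂ the equation d·w² = t⁴ − 2(A+B)·(r/d)·t²·z² + (A−B)²·(r/d)²·z⁴ holds. -/
private lemma val_two' : (2 : ℚ_[2]).valuation = 1 := by
  have := Padic.valuation_p (p := 2)
  simpa using this

private lemma val_neg' (x : ℚ_[2]) : (-x).valuation = x.valuation := by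
  rcases eq_or_ne x 0 with rfl | hx
  · simp
  · have h1 : ((-1 : ℤ) : ℚ_[2]) ≠ 0 := by norm_num
    have h : ((-1 : ℤ) : ℚ_[2]) * x = -x := by push_cast; ring
    have h2 := Padic.valuation_mul (p := 2) h1 hx
    have hv1 : ((-1 : ℤ) : ℚ_[2]).valuation = 0 := by
      rw [Padic.valuation_intCast]
      simp [padicValInt]
    rw [h, hv1] at h2
    simpa using h2

private lemma val_pow' (x : ℚ_[2]) (hx : x ≠ 0) (n : ℕ) :
    (x ^ n).valuation = n * x.valuation := by
  induction n with
  | zero => simp [Padic.valuation_one]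
  | succ n ih =>
    rw [pow_succ, Padic.valuation_mul (pow_ne_zero n hx) hx, ih]
    push_cast; ring

private lemma val_add_lt' {x y : ℚ_[2]} (hx : x ≠ 0) (hy : y ≠ 0)
    (h : x.valuation < y.valuation) : (x + y).valuation = x.valuation := by
  have hxy : x + y ≠ 0 := by
    intro h0
    have hyx : y = -x := eq_neg_of_add_eq_zero_right h0
    rw [hyx, val_neg'] at h
    exact lt_irrefl _ h
  apply le_antisymm
  · have h2 : min ((x + y).valuation) ((-y).valuation) ≤ ((x + y) + -y).valuation :=
      Padic.le_valuation_add (by simpa using hx)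
    rw [val_neg'] at h2
    simp only [add_neg_cancel_right] at h2
    rcases le_total ((x + y).valuation) (y.valuation) with hle | hle
    · rwa [min_eq_left hle] at h2
    · rw [min_eq_right hle] at h2; omega
  · have h3 := Padic.le_valuation_add (p := 2) hxy
    exact le_trans (le_min (le_refl _) (le_of_lt h)) h3

private lemma val_unit_coe (c : ℤ_[2]) (hc : IsUnit c) :
    (c : ℚ_[2]) ≠ 0 ∧ (c : ℚ_[2]).valuation = 0 := by
  have hn : ‖c‖ = 1 := PadicInt.isUnit_iff.mp hc
  have hn' : ‖(c : ℚ_[2])‖ = 1 := by rw [← PadicInt.norm_def]; exact hn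
  have hne : (c : ℚ_[2]) ≠ 0 := by
    intro h0; rw [h0, norm_zero] at hn'; norm_num at hn'
  refine ⟨hne, ?_⟩
  have hv := Padic.norm_eq_zpow_neg_valuation hne
  rw [hn'] at hv
  have h2 : ((2 : ℝ)) ^ (-(c : ℚ_[2]).valuation) = (2 : ℝ) ^ (0 : ℤ) := by
    push_cast at hv ⊢; rw [← hv]; norm_num
  have := zpow_right_injective₀ (by norm_num : (0:ℝ) < 2) (by norm_num) h2
  omega

private lemma sq_mod8 (y : ℤ_[2]) (hy : IsUnit y) :
    PadicInt.toZModPow (p := 2) 3 (y ^ 2) = 1 := by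
  have h := hy.map (PadicInt.toZModPow (p := 2) 3)
  have key : ∀ a : ZMod (2 ^ 3), IsUnit a → a ^ 2 = 1 := by decide
  rw [map_pow]
  exact key _ h

private lemma four_unit (y : ℤ_[2]) (hy : IsUnit y) (u : ℤ)
    (hu : ((u : ZMod (2 ^ 3))) = 5) :
    ∃ c : ℤ_[2], IsUnit c ∧ y ^ 2 - (u : ℤ_[2]) = 4 * c := by
  have h8 : PadicInt.toZModPow (p := 2) 3 (y ^ 2 - (u : ℤ_[2]) - ((4 : ℤ) : ℤ_[2])) = 0 := by
    rw [map_sub, map_sub, sq_mod8 y hy, map_intCast, map_intCast, hu]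
    decide
  have hker : y ^ 2 - (u : ℤ_[2]) - ((4 : ℤ) : ℤ_[2]) ∈
      RingHom.ker (PadicInt.toZModPow (p := 2) 3) := h8
  rw [PadicInt.ker_toZModPow, Ideal.mem_span_singleton] at hker
  obtain ⟨k, hk⟩ := hker
  refine ⟨1 + 2 * k, ?_, by push_cast at hk; linear_combination hk⟩
  by_contra hnu
  have hlt : ‖(1 + 2 * k : ℤ_[2])‖ < 1 := PadicInt.mem_nonunits.mp (by
    rwa [mem_nonunits_iff])
  have hdvd : ((2 : ℕ) : ℤ_[2]) ∣ (1 + 2 * k) := (PadicInt.norm_lt_one_iff_dvd _).mp hlt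
  have hdvd1 : ((2 : ℕ) : ℤ_[2]) ∣ 1 := by
    have h2k : ((2 : ℕ) : ℤ_[2]) ∣ 2 * k := by push_cast; exact Dvd.intro k rfl
    have h1 : (1 : ℤ_[2]) = (1 + 2 * k) - 2 * k := by ring
    rw [h1]; exact dvd_sub hdvd h2k
  have := (PadicInt.norm_lt_one_iff_dvd _).mpr hdvd1
  rw [norm_one] at this
  norm_num at this

private lemma core (d u : ℤ) (hd : d ≠ 0) (hd2 : padicValInt 2 d = 1)
    (hu8 : ((u : ZMod (2 ^ 3))) = 5) (hu1 : Odd u) (Y S : ℚ_[2]) :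
    (d : ℚ_[2]) * Y ^ 2 ≠ S ^ 2 - 4 * (u : ℚ_[2]) := by
  intro h
  have hu0 : u ≠ 0 := by rintro rfl; simp [Int.even_iff, Int.odd_iff] at hu1
  have huq : (u : ℚ_[2]) ≠ 0 := Int.cast_ne_zero.mpr hu0
  have hvu : (u : ℚ_[2]).valuation = 0 := by
    rw [Padic.valuation_intCast, padicValInt.eq_zero_of_not_dvd]
    · simp
    · rw [Int.odd_iff] at hu1; omega
  have hdq : (d : ℚ_[2]) ≠ 0 := Int.cast_ne_zero.mpr hd
  have hvd : (d : ℚ_[2]).valuation = 1 := by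
    rw [Padic.valuation_intCast, hd2]; simp
  have h4 : (4 : ℚ_[2]) ≠ 0 := by norm_num
  have hv4 : (4 : ℚ_[2]).valuation = 2 := by
    have h42 : (4 : ℚ_[2]) = 2 ^ 2 := by norm_num
    rw [h42, val_pow' 2 (by norm_num) 2, val_two']
    norm_num
  have h4u : (4 : ℚ_[2]) * u ≠ 0 := mul_ne_zero h4 huq
  have hv4u : ((4 : ℚ_[2]) * u).valuation = 2 := by
    rw [Padic.valuation_mul h4 huq, hv4, hvu]
    norm_num
  -- if Y = 0 then S^2 = 4u
  rcases eq_or_ne S 0 with rfl | hS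
  · rcases eq_or_ne Y 0 with rfl | hY
    · have : (4 : ℚ_[2]) * u = 0 := by linear_combination h
      exact h4u this
    · have hY2 : Y ^ 2 ≠ 0 := pow_ne_zero 2 hY
      have hL : ((d : ℚ_[2]) * Y ^ 2).valuation = 1 + 2 * Y.valuation := by
        rw [Padic.valuation_mul hdq hY2, val_pow' Y hY 2, hvd]; push_cast; ring
      have hRe : (0 : ℚ_[2]) ^ 2 - 4 * u = -(4 * u) := by ring
      have hv := congrArg Padic.valuation h
      rw [hL, hRe, val_neg', hv4u] at hv
      omega
  · have hS2 : S ^ 2 ≠ 0 := pow_ne_zero 2 hS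
    have hvS2 : (S ^ 2).valuation = 2 * S.valuation := by
      rw [val_pow' S hS 2]; push_cast; ring
    have hsplit : S ^ 2 - 4 * u = S ^ 2 + -(4 * u) := by ring
    rcases lt_trichotomy (S.valuation) 1 with hlt | heq1 | hgt
    · -- v(S^2) < 2 = v(4u)
      have hY : Y ≠ 0 := by
        rintro rfl
        have hSe : S ^ 2 = 4 * u := by linear_combination -h
        have := congrArg Padic.valuation hSe
        rw [hvS2, hv4u] at this; omega
      have hvadd : (S ^ 2 + -(4 * u)).valuation = 2 * S.valuation := by
        rw [← hvS2]
        exact val_add_lt' hS2 (by simpa using h4u) (by rw [hvS2, val_neg', hv4u]; omega)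
      have hv := congrArg Padic.valuation h
      rw [Padic.valuation_mul hdq (pow_ne_zero 2 hY), val_pow' Y hY 2, hvd,
        hsplit, hvadd] at hv
      push_cast at hv; omega
    · -- v(S) = 1 : the mod 8 case
      -- s0 = S / 2 is a unit
      set s₀ : ℚ_[2] := S / 2 with hs₀def
      have hs : S = 2 * s₀ := by rw [hs₀def]; field_simp
      have hs₀ne : s₀ ≠ 0 := by
        intro h0; rw [h0, mul_zero] at hs; exact hS hs
      have hvs₀ : s₀.valuation = 0 := by
        have := congrArg Padic.valuation hs
        rw [Padic.valuation_mul (by norm_num : (2:ℚ_[2]) ≠ 0) hs₀ne, val_two', heq1] at this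
        omega
      have hnorm : ‖s₀‖ = 1 := by
        rw [Padic.norm_eq_zpow_neg_valuation hs₀ne, hvs₀]; norm_num
      set y : ℤ_[2] := ⟨s₀, le_of_eq hnorm⟩ with hydef
      have hyc : (y : ℚ_[2]) = s₀ := rfl
      have hyu : IsUnit y := PadicInt.isUnit_iff.mpr (by rw [PadicInt.norm_def, hyc]; exact hnorm)
      rcases eq_or_ne Y 0 with rfl | hY
      · have e : s₀ ^ 2 = (u : ℚ_[2]) := by
          rw [hs] at h; linear_combination (-(1:ℚ_[2])/4) * h
        have hyu2 : (y ^ 2 : ℤ_[2]) = ((u : ℤ) : ℤ_[2]) := by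
          apply Subtype.coe_injective
          push_cast [hyc]
          exact_mod_cast e
        have hcontr := sq_mod8 y hyu
        rw [hyu2, map_intCast, hu8] at hcontr
        exact absurd hcontr (by decide)
      · obtain ⟨c, hcu, hcc⟩ := four_unit y hyu u hu8
        obtain ⟨hcne, hcval⟩ := val_unit_coe c hcu
        have hccQ : s₀ ^ 2 - (u : ℚ_[2]) = 4 * (c : ℚ_[2]) := by
          have h' := congrArg (fun x : ℤ_[2] => (x : ℚ_[2])) hcc
          rw [← hyc]
          push_cast at h'
          exact_mod_cast h'
        have hR : S ^ 2 - 4 * (u : ℚ_[2]) = 16 * c := by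
          rw [hs]; linear_combination 4 * hccQ
        have h16 : (16 : ℚ_[2]) = 2 ^ 4 := by norm_num
        have hv16 : (16 : ℚ_[2]).valuation = 4 := by
          rw [h16, val_pow' 2 (by norm_num) 4, val_two']; norm_num
        have hv := congrArg Padic.valuation h
        rw [Padic.valuation_mul hdq (pow_ne_zero 2 hY), val_pow' Y hY 2, hvd, hR,
          Padic.valuation_mul (by norm_num : (16:ℚ_[2]) ≠ 0) hcne, hv16, hcval] at hv
        push_cast at hv; omega
    · -- v(S^2) > 2 = v(4u)
      have hY : Y ≠ 0 := by
        rintro rfl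
        have hSe : S ^ 2 = 4 * u := by linear_combination -h
        have := congrArg Padic.valuation hSe
        rw [hvS2, hv4u] at this; omega
      have hvadd : (-(4 * u) + S ^ 2).valuation = 2 := by
        rw [← hv4u, ← val_neg' (4 * u)]
        exact val_add_lt' (by simpa using h4u) hS2 (by rw [hvS2, val_neg', hv4u]; omega)
      have hsplit2 : S ^ 2 - 4 * u = -(4 * u) + S ^ 2 := by ring
      have hv := congrArg Padic.valuation h
      rw [Padic.valuation_mul hdq (pow_ne_zero 2 hY), val_pow' Y hY 2, hvd,
        hsplit2, hvadd] at hv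
      push_cast at hv; omega

theorem no_two_adic_points (A B : ℤ) (hA : A % 8 = 1) (hB : B % 8 = 5)
    (d r : ℤ) (hd : d ≠ 0) (hd2 : padicValInt 2 d = 1) (hr : Odd r) :
    ¬ ∃ w t z : ℚ_[2], (w, t, z) ≠ (0, 0, 0) ∧
      (d : ℚ_[2]) * w^2 =
        t^4 - 2 * ((A : ℚ_[2]) + B) * (((r : ℚ) / (d : ℚ) : ℚ) : ℚ_[2]) * t^2 * z^2
          + ((A : ℚ_[2]) - B)^2 * (((r : ℚ) / (d : ℚ) : ℚ) : ℚ_[2])^2 * z^4 := by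
  rintro ⟨w, t, z, hne, heq⟩
  have hdq : (d : ℚ_[2]) ≠ 0 := Int.cast_ne_zero.mpr hd
  have hC : (((r : ℚ) / (d : ℚ) : ℚ) : ℚ_[2]) = (r : ℚ_[2]) / (d : ℚ_[2]) := by
    push_cast; ring
  rw [hC] at heq
  rcases eq_or_ne z 0 with rfl | hz
  · -- z = 0 case: d w^2 = t^4
    have heq' : (d : ℚ_[2]) * w ^ 2 = t ^ 4 := by
      rw [heq]; ring
    rcases eq_or_ne t 0 with rfl | ht
    · have hw : w = 0 := by
        have : w ^ 2 = 0 := by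
          field_simp at heq'
          simpa [hdq] using heq'
        exact pow_eq_zero_iff (by norm_num) |>.mp this
      exact hne (by rw [hw])
    · have hw : w ≠ 0 := by
        rintro rfl
        rw [zero_pow (by norm_num), mul_zero] at heq'
        exact ht (by simpa using (pow_eq_zero_iff (n := 4) (by norm_num)).mp heq'.symm)
      have hvd : (d : ℚ_[2]).valuation = 1 := by
        rw [Padic.valuation_intCast, hd2]; simp
      have hv := congrArg Padic.valuation heq'
      rw [Padic.valuation_mul hdq (pow_ne_zero 2 hw), val_pow' w hw 2, hvd,
        val_pow' t ht 4] at hv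
      push_cast at hv; omega
  · -- z ≠ 0 : reduce to the core lemma
    set u : ℤ := A * B * r ^ 2 with hudef
    have hu1 : Odd u := by
      refine Odd.mul (Odd.mul ?_ ?_) (hr.pow)
      · exact Int.odd_iff.mpr (by omega)
      · exact Int.odd_iff.mpr (by omega)
    have hA8 : ((A : ℤ) : ZMod (2 ^ 3)) = 1 := by
      have h8 : A = 8 * (A / 8) + 1 := by omega
      rw [h8]; push_cast
      rw [show (8 : ZMod (2 ^ 3)) = 0 by decide]
      ring
    have hB8 : ((B : ℤ) : ZMod (2 ^ 3)) = 5 := by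
      have h8 : B = 8 * (B / 8) + 5 := by omega
      rw [h8]; push_cast
      rw [show (8 : ZMod (2 ^ 3)) = 0 by decide]
      ring
    have hr8 : ((r : ℤ) : ZMod (2 ^ 3)) ^ 2 = 1 := by
      obtain ⟨k, hk⟩ := hr
      obtain ⟨m, hm⟩ := Int.even_mul_succ_self k
      have h2 : r ^ 2 = 8 * m + 1 := by
        rw [hk]; ring_nf; linear_combination 4 * hm
      calc ((r : ℤ) : ZMod (2 ^ 3)) ^ 2 = ((r ^ 2 : ℤ) : ZMod (2 ^ 3)) := by push_cast; ring
        _ = ((8 * m + 1 : ℤ) : ZMod (2 ^ 3)) := by rw [h2]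
        _ = 1 := by push_cast; rw [show (8 : ZMod (2 ^ 3)) = 0 by decide]; ring
    have hu8 : ((u : ℤ) : ZMod (2 ^ 3)) = 5 := by
      rw [hudef]; push_cast
      rw [hA8, hB8]
      rw [show ((r : ℤ) : ZMod (2 ^ 3)) ^ 2 = 1 from hr8]
      norm_num
    set Y : ℚ_[2] := (d : ℚ_[2]) * w / z ^ 2 with hYdef
    set S : ℚ_[2] := (d : ℚ_[2]) * t ^ 2 / z ^ 2 - ((A : ℚ_[2]) + B) * r with hSdef
    have key : (d : ℚ_[2]) * Y ^ 2 = S ^ 2 - 4 * (u : ℚ_[2]) := by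
      rw [hYdef, hSdef, hudef]
      push_cast
      field_simp
      field_simp at heq
      apply mul_left_cancel₀ hdq
      linear_combination (d : ℚ_[2]) * heq
    exact core d u hd hd2 hu8 hu1 Y S key
end
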